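/- Let $W''$ be a closed walk on a finite vertex set $V$ visiting every vertex of $V$, let $d$ be a metric on $V$, and let $\mathcal{P}$ be a set of pairwise vertex-disjoint paths each of which occurs as a contiguous subpath of $W''$. Then there exists a Hamiltonian cycle $C$ on $V$ such that $d(C) \leq d(W'')$ and every path $P \in \mathcal{P}$ is a contiguous subpath of $C$ (in particular $E(P) \subseteq E(C)$ for all $P \in \mathcal{P}$). -/

import Mathlib

open Finset

variable {V : Type*} [Fintype V] [DecidableEq V]

/-- symmetrized edge cost of a (possibly asymmetric) weight function -/
noncomputable def ecost (d : V → V → ℝ) : Sym2 V → ℝ :=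
  Sym2.lift ⟨fun x y => (d x y + d y x) / 2, fun x y => by ring⟩

/-- total cost of an edge set -/
noncomputable def cost (d : V → V → ℝ) (F : Finset (Sym2 V)) : ℝ :=
  ∑ e ∈ F, ecost d e

/-- edges of a cyclic tour given by a vertex list -/
def cycleEdges (l : List V) : Finset (Sym2 V) :=
  ((l.zip (l.rotate 1)).map fun p => s(p.1, p.2)).toFinset

/-- edges of a path given by a vertex list -/
def pathEdges (l : List V) : Finset (Sym2 V) :=
  (l.zipWith (fun a b => s(a, b)) l.tail).toFinset

def IsHamCycle (l : List V) : Prop := l.Nodup ∧ ∀ v : V, v ∈ l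

def IsHamPath (l : List V) : Prop := l.Nodup ∧ ∀ v : V, v ∈ l

def IsMetric (d : V → V → ℝ) : Prop :=
  (∀ x y, 0 ≤ d x y) ∧ (∀ x, d x x = 0) ∧ (∀ x y, d x y = d y x) ∧
    ∀ x y z, d x z ≤ d x y + d y z

def IsSpanningTree (E : Finset (Sym2 V)) : Prop :=
  (SimpleGraph.fromEdgeSet (E : Set (Sym2 V))).IsTree

/-- edge multiset of a walk given by its vertex list -/
def walkEdges (l : List V) : Multiset (Sym2 V) :=
  (l.zipWith (fun a b => s(a, b)) l.tail : List (Sym2 V))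

/-- cost of a walk, edges counted with multiplicity -/
noncomputable def walkCost (d : V → V → ℝ) (l : List V) : ℝ :=
  ((walkEdges l).map (ecost d)).sum

def IsClosedWalk (l : List V) : Prop := l ≠ [] ∧ l.head? = l.getLast?

/-- vertices touched by an edge set -/
def edgeVerts (F : Finset (Sym2 V)) : Finset V :=
  Finset.univ.filter fun v => ∃ e ∈ F, v ∈ e

set_option linter.unusedSectionVars false

/-- edge list of a path -/
def wlist (l : List V) : List (Sym2 V) := l.zipWith (fun a b => s(a, b)) l.tail

/-- edge list of a cycle -/
def cel (l : List V) : List (Sym2 V) := l.zipWith (fun a b => s(a, b)) (l.rotate 1)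

lemma ecost_mk (d : V → V → ℝ) (a b : V) : ecost d s(a, b) = (d a b + d b a) / 2 := rfl

lemma ecost_nonneg (d : V → V → ℝ) (hd : IsMetric d) (e : Sym2 V) : 0 ≤ ecost d e := by
  induction e using Sym2.ind with
  | _ a b => rw [ecost_mk]; have := hd.1 a b; have := hd.1 b a; linarith

lemma ecost_tri (d : V → V → ℝ) (hd : IsMetric d) (a b c : V) :
    ecost d s(a, c) ≤ ecost d s(a, b) + ecost d s(b, c) := by
  simp only [ecost_mk]
  have h1 := hd.2.2.2 a b c
  have h2 := hd.2.2.2 c b a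
  linarith

lemma wlist_cons₂ (a b : V) (l : List V) : wlist (a :: b :: l) = s(a, b) :: wlist (b :: l) := rfl

lemma wlist_snoc : ∀ (l : List V) (x b : V),
    wlist ((x :: l) ++ [b]) = wlist (x :: l) ++ [s((x :: l).getLast (List.cons_ne_nil x l), b)] := by
  intro l
  induction l with
  | nil => intro x b; rfl
  | cons y l' ih =>
      intro x b
      have h3 : wlist ((x :: y :: l') ++ [b]) = s(x, y) :: wlist ((y :: l') ++ [b]) := rfl
      rw [h3, ih y b, wlist_cons₂]
      simp [List.getLast_cons]

set_option linter.unusedSectionVars false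

lemma cel_cons (x : V) (xs : List V) : cel (x :: xs) = wlist ((x :: xs) ++ [x]) := by
  unfold cel wlist
  have hrot : (x :: xs).rotate 1 = xs ++ [x] := by
    rw [show (1 : ℕ) = 0 + 1 from rfl, List.rotate_cons_succ, List.rotate_zero]
  rw [hrot]
  have hlen : (x :: xs).length = (xs ++ [x]).length := by simp
  have h1 : (x :: xs) ++ [x] = (x :: xs) ++ [x] := rfl
  have htail : ((x :: xs) ++ [x]).tail = xs ++ [x] := by simp
  rw [htail]
  have := List.zipWith_append (f := fun a b => s(a, b)) (l₁ := x :: xs) (l₁' := [x]) (l₂ := xs ++ [x]) (l₂' := []) hlen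
  simp at this
  exact this.symm

lemma getLast_concat' (l : List V) (x : V) (h : l ++ [x] ≠ []) : (l ++ [x]).getLast h = x := by
  rw [List.getLast_append]
  simp

lemma cel_rotate_one (l : List V) : (cel (l.rotate 1)).Perm (cel l) := by
  rcases l with _ | ⟨x, xs⟩
  · simp [List.rotate_nil]
  rcases xs with _ | ⟨y, ys⟩
  · simp [List.rotate_singleton]
  have hrot : (x :: y :: ys).rotate 1 = y :: (ys ++ [x]) := by
    rw [show (1 : ℕ) = 0 + 1 from rfl, List.rotate_cons_succ, List.rotate_zero]
    rfl
  rw [hrot, cel_cons, wlist_snoc (ys ++ [x]) y y]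
  have hlast : (y :: (ys ++ [x])).getLast (List.cons_ne_nil _ _) = x := by
    exact getLast_concat' (y :: ys) x (List.cons_ne_nil y (ys ++ [x]))
  rw [hlast, cel_cons]
  exact List.perm_append_singleton _ _

lemma cel_rotate (l : List V) (n : ℕ) : (cel (l.rotate n)).Perm (cel l) := by
  induction n with
  | zero => rw [List.rotate_zero]
  | succ k ih =>
      have h1 : l.rotate (k + 1) = (l.rotate k).rotate 1 := by
        rw [List.rotate_rotate]
      rw [h1]
      exact (cel_rotate_one (l.rotate k)).trans ih

/-- dropping the head of a cyclic list does not increase cost -/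
lemma cel_drop_cost (d : V → V → ℝ) (hd : IsMetric d) (v : V) (T : List V) (hT : T ≠ []) :
    ((cel T).map (ecost d)).sum ≤ ((cel (v :: T)).map (ecost d)).sum := by
  rcases T with _ | ⟨t, T'⟩
  · exact absurd rfl hT
  have h1 : cel (t :: T') = wlist (t :: T') ++ [s((t :: T').getLast (List.cons_ne_nil _ _), t)] := by
    rw [cel_cons, wlist_snoc]
  have h2 : cel (v :: t :: T') =
      (s(v, t) :: wlist (t :: T')) ++ [s((t :: T').getLast (List.cons_ne_nil _ _), v)] := by
    rw [cel_cons]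
    have h3 : (v :: t :: T') ++ [v] = (v :: (t :: T')) ++ [v] := rfl
    rw [h3, wlist_snoc (t :: T') v v]
    have h4 : (v :: t :: T').getLast (List.cons_ne_nil _ _) = (t :: T').getLast (List.cons_ne_nil _ _) :=
      List.getLast_cons _
    rw [h4]
    rfl
  rw [h1, h2]
  simp only [List.map_append, List.sum_append, List.map_cons, List.sum_cons, List.map_nil,
    List.sum_nil]
  have htri := ecost_tri d hd ((t :: T').getLast (List.cons_ne_nil t T')) v t
  linarith

/-- edge list of a prefix is a prefix of the edge list -/
lemma wlist_prefix_append : ∀ (A B : List V), wlist A <+: wlist (A ++ B) := by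
  intro A
  induction A with
  | nil => intro B; simp [wlist]
  | cons x A' ih =>
      intro B
      rcases A' with _ | ⟨y, A''⟩
      · simp [wlist]
      · have h1 : wlist ((x :: y :: A'') ++ B) = s(x, y) :: wlist ((y :: A'') ++ B) := rfl
        rw [wlist_cons₂, h1]
        obtain ⟨t, ht⟩ := ih B
        exact ⟨t, by rw [List.cons_append, ← ht]⟩

/-- edges of a prefix of a cyclic list are among cycle edges -/
lemma wlist_subset_cel {Q l : List V} (h : Q <+: l) : ∀ e ∈ wlist Q, e ∈ cel l := by
  rcases l with _ | ⟨x, xs⟩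
  · have : Q = [] := List.prefix_nil.mp h
    subst this
    simp [wlist]
  · intro e he
    rw [cel_cons]
    obtain ⟨t, ht⟩ := h
    have h2 : (x :: xs) ++ [x] = Q ++ (t ++ [x]) := by rw [← ht]; simp
    rw [h2]
    exact (wlist_prefix_append Q (t ++ [x])).subset he

/-- reversing a path reverses its edge list -/
lemma wlist_reverse : ∀ (l : List V), wlist l.reverse = (wlist l).reverse := by
  intro l
  induction l with
  | nil => rfl
  | cons x xs ih =>
      rcases xs with _ | ⟨y, ys⟩
      · rfl
      · have h1 : (x :: y :: ys).reverse = (y :: ys).reverse ++ [x] := by simp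
        rw [h1]
        obtain ⟨c, cs, hc⟩ : ∃ c cs, (y :: ys).reverse = c :: cs :=
          List.exists_cons_of_ne_nil (by simp)
        rw [hc, wlist_snoc cs c x]
        have hlast : (c :: cs).getLast (List.cons_ne_nil _ _) = y := by
          have h5 := List.getLast?_reverse (l := y :: ys)
          rw [hc] at h5
          rw [List.getLast?_eq_getLast (l := c :: cs) (List.cons_ne_nil _ _)] at h5
          simpa using h5
        rw [hlast, ← hc, ih, wlist_cons₂]
        simp [Sym2.eq_swap]

/-- avoid: a prefix avoiding v stays within the part before v -/
lemma pref_avoid {Q A B : List V} {v : V} (hv : v ∉ Q) (h : Q <+: A ++ v :: B) : Q <+: A := by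
  rcases List.prefix_or_prefix_of_prefix h (List.prefix_append A (v :: B)) with h1 | h1
  · exact h1
  · obtain ⟨Q', rfl⟩ := h1
    have h2 : Q' <+: v :: B := ((List.prefix_append_right_inj A).mp h)
    rcases Q' with _ | ⟨q, Q''⟩
    · simpa using List.prefix_refl A
    · obtain ⟨t, ht⟩ := h2
      have : q = v := by simpa using congrArg (List.head? ) ht.symm |>.symm
      subst this
      exact absurd (by simp) hv

lemma rotate_mul_add (l : List V) (q b : ℕ) : l.rotate (l.length * q + b) = l.rotate b := by
  induction q with
  | zero => simp
  | succ k ih =>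
      have h1 : l.length * (k + 1) + b = l.length + (l.length * k + b) := by ring
      rw [h1, ← List.rotate_rotate, List.rotate_length, ih]

lemma rot_shift (l : List V) (a b : ℕ) : ∃ c, l.rotate b = (l.rotate a).rotate c := by
  rcases eq_or_ne l [] with rfl | hl
  · exact ⟨0, by simp [List.rotate_nil]⟩
  have hlen : 0 < l.length := List.length_pos_iff.mpr hl
  refine ⟨(l.length - a % l.length) + b, ?_⟩
  rw [List.rotate_rotate]
  have h1 : a + ((l.length - a % l.length) + b) = l.length * (a / l.length + 1) + b := by
    have h2 := Nat.div_add_mod a l.length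
    have h3 : a % l.length < l.length := Nat.mod_lt _ hlen
    have h4 : l.length * (a / l.length + 1) = l.length * (a / l.length) + l.length := by ring
    omega
  rw [h1, rotate_mul_add]

/-- dropping the head v from a cyclic list preserves prefixes avoiding v -/
lemma step_avoid {Q T : List V} {v : V} {m : ℕ} (hv : v ∉ Q) (hT : T ≠ [])
    (h : Q <+: (v :: T).rotate m) : ∃ k, Q <+: T.rotate k := by
  have hlen : 0 < (v :: T).length := by simp
  rw [← List.rotate_mod] at h
  set m' := m % (v :: T).length with hm'
  have hmlt : m' < (v :: T).length := Nat.mod_lt _ hlen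
  rcases m' with _ | s
  · rw [List.rotate_zero] at h
    rcases Q with _ | ⟨q, Q'⟩
    · exact ⟨0, List.nil_prefix⟩
    · obtain ⟨t, ht⟩ := h
      have : q = v := by simpa using congrArg (List.head?) ht.symm |>.symm
      subst this
      exact absurd (by simp) hv
  · have hs : s ≤ T.length := by
      have h9 := hmlt
      simp at h9
      omega
    have h2 : (v :: T).rotate (s + 1) = T.drop s ++ v :: T.take s := by
      rw [List.rotate_eq_drop_append_take (by simpa using Nat.succ_le_succ hs)]
      simp
    rw [h2] at h
    have h3 : Q <+: T.drop s := pref_avoid hv h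
    refine ⟨s, ?_⟩
    rw [List.rotate_eq_drop_append_take hs]
    exact h3.trans (List.prefix_append _ _)

lemma rot_app (A B : List V) : (A ++ B).rotate A.length = B ++ A := by
  rw [List.rotate_eq_drop_append_take (by simp), List.drop_left, List.take_left]

/-- an infix of the closed walk `(x :: xs) ++ [x]` is a prefix of some rotation of `x :: xs` -/
lemma infix_closed {Q : List V} (hQ : Q.Nodup) (x : V) (xs : List V)
    (h : Q <:+: (x :: xs) ++ [x]) : ∃ m, Q <+: (x :: xs).rotate m := by
  obtain ⟨A, B, hAB⟩ := h
  rcases List.eq_nil_or_concat B with rfl | ⟨B', c, rfl⟩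
  · -- B = [] : A ++ Q = (x :: xs) ++ [x]
    rw [List.append_nil] at hAB
    rcases List.eq_nil_or_concat Q with rfl | ⟨Q', q, rfl⟩
    · exact ⟨0, List.nil_prefix⟩
    · rw [List.concat_eq_append, ← List.append_assoc] at hAB
      obtain ⟨h1, h2⟩ := List.append_inj' hAB (by simp)
      have hq : q = x := by simpa using h2
      rcases A with _ | ⟨a, A'⟩
      · simp only [List.nil_append] at h1
        exfalso
        have hx : q ∈ Q' := by rw [h1, hq]; exact List.mem_cons_self
        rw [List.concat_eq_append, List.nodup_append] at hQ
        exact hQ.2.2 q hx q (by simp) rfl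
      · have ha : a = x ∧ A' ++ Q' = xs := by
          rw [List.cons_append] at h1
          exact ⟨by injection h1, by injection h1⟩
        obtain ⟨rfl, h3⟩ := ha
        refine ⟨(a :: A').length, ?_⟩
        rw [show a :: xs = (a :: A') ++ Q' from by rw [← h3]; rfl, rot_app,
          List.concat_eq_append, hq]
        exact (List.prefix_append_right_inj Q').mpr ⟨A', rfl⟩
  · -- B = B' ++ [c] : A ++ Q ++ B' = x :: xs
    have hAB2 : (A ++ (Q ++ B')) ++ [c] = (x :: xs) ++ [x] := by
      rw [← hAB, List.concat_eq_append]
      simp [List.append_assoc]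
    obtain ⟨h1, _⟩ := List.append_inj' hAB2 (by simp)
    refine ⟨A.length, ?_⟩
    rw [← h1, rot_app]
    exact (List.prefix_append Q B').trans (List.prefix_append (Q ++ B') A)

lemma transfer_pref {L T : List V} {v : V} {k : ℕ} (h1 : v :: T = L.rotate k) (hT : T ≠ [])
    {Q : List V} (hvQ : v ∉ Q) {m : ℕ} (hm : Q <+: L.rotate m) : ∃ k', Q <+: T.rotate k' := by
  obtain ⟨c, hc⟩ := rot_shift L k m
  rw [hc, ← h1] at hm
  exact step_avoid hvQ hT hm

lemma case2core {Q L : List V} {v : V} {m : ℕ} (hQ : Q.Nodup) (hvQ : v ∈ Q)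
    (hpre : Q <+: L.rotate m) (hcount : 2 ≤ List.count v L) :
    ∃ k T, v :: T = L.rotate k ∧ v ∈ T ∧ ∃ m', Q <+: T.rotate m' := by
  obtain ⟨R, hR⟩ := hpre
  have hcnt : 2 ≤ List.count v (L.rotate m) := by
    rw [(List.rotate_perm L m).count_eq v]; exact hcount
  have hvR : v ∈ R := by
    rw [← hR, List.count_append, List.count_eq_one_of_mem hQ hvQ] at hcnt
    exact List.count_pos_iff.mp (by omega)
  obtain ⟨R₁, R₂, hRsplit⟩ := List.append_of_mem hvR
  refine ⟨m + (Q ++ R₁).length, R₂ ++ (Q ++ R₁), ?_, by simp [hvQ], ⟨R₂.length, ?_⟩⟩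
  · rw [← List.rotate_rotate, ← hR, hRsplit,
      show Q ++ (R₁ ++ v :: R₂) = (Q ++ R₁) ++ (v :: R₂) from by simp, rot_app]
    rfl
  · rw [rot_app]
    exact (List.prefix_append Q R₁).trans (List.prefix_append (Q ++ R₁) R₂)

lemma main_ind (d : V → V → ℝ) (hd : IsMetric d) {r : ℕ} (P : Fin r → List V)
    (hPnd : ∀ j, (P j).Nodup)
    (hPdisj : ∀ i j, i ≠ j → Disjoint (P i).toFinset (P j).toFinset) :
    ∀ n (L : List V), L.length ≤ n → L ≠ [] →
    (∀ j, ∃ m, (P j) <+: L.rotate m ∨ (P j).reverse <+: L.rotate m) →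
    ∃ C : List V, C.Nodup ∧ (∀ v, v ∈ L → v ∈ C) ∧
      ((cel C).map (ecost d)).sum ≤ ((cel L).map (ecost d)).sum ∧
      (∀ j, ∃ m, (P j) <+: C.rotate m ∨ (P j).reverse <+: C.rotate m) := by
  intro n
  induction n with
  | zero =>
      intro L hlen hne _
      exact absurd (List.length_eq_zero_iff.mp (Nat.le_zero.mp hlen)) hne
  | succ n ih =>
      intro L hlen hne hinv
      by_cases hnd : L.Nodup
      · exact ⟨L, hnd, fun v hv => hv, le_refl _, hinv⟩
      obtain ⟨v, hv2⟩ : ∃ v, 2 ≤ List.count v L := by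
        by_contra hc
        push_neg at hc
        exact hnd (List.nodup_iff_count_le_one.mpr fun a => by have := hc a; omega)
      have hkey : ∃ k T, v :: T = L.rotate k ∧ v ∈ T ∧
          (∀ j, ∃ m', (P j) <+: T.rotate m' ∨ (P j).reverse <+: T.rotate m') := by
        by_cases hvP : ∃ j, v ∈ P j
        · obtain ⟨j, hj⟩ := hvP
          obtain ⟨m, hm⟩ := hinv j
          have htransfer : ∀ (k : ℕ) (T : List V), v :: T = L.rotate k → v ∈ T →
              ∀ i, i ≠ j → ∃ m', (P i) <+: T.rotate m' ∨ (P i).reverse <+: T.rotate m' := by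
            intro k T h1 h2 i hij
            have hTne : T ≠ [] := List.ne_nil_of_mem h2
            have hvi : v ∉ P i := fun hmem =>
              (Finset.disjoint_left.mp (hPdisj i j hij)) (List.mem_toFinset.mpr hmem)
                (List.mem_toFinset.mpr hj)
            obtain ⟨mi, hmi⟩ := hinv i
            rcases hmi with hmi | hmi
            · obtain ⟨k', hk'⟩ := transfer_pref h1 hTne hvi hmi
              exact ⟨k', Or.inl hk'⟩
            · obtain ⟨k', hk'⟩ := transfer_pref h1 hTne
                (fun hc => hvi (List.mem_reverse.mp hc)) hmi
              exact ⟨k', Or.inr hk'⟩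
          rcases hm with hm | hm
          · obtain ⟨k, T, h1, h2, m', h3⟩ := case2core (hPnd j) hj hm hv2
            refine ⟨k, T, h1, h2, fun i => ?_⟩
            by_cases hij : i = j
            · subst hij; exact ⟨m', Or.inl h3⟩
            · exact htransfer k T h1 h2 i hij
          · obtain ⟨k, T, h1, h2, m', h3⟩ := case2core (List.nodup_reverse.mpr (hPnd j))
              (List.mem_reverse.mpr hj) hm hv2
            refine ⟨k, T, h1, h2, fun i => ?_⟩
            by_cases hij : i = j
            · subst hij; exact ⟨m', Or.inr h3⟩
            · exact htransfer k T h1 h2 i hij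
        · have hvL : v ∈ L := List.count_pos_iff.mp (by omega)
          obtain ⟨A, B, hLAB⟩ := List.append_of_mem hvL
          have hvBA : v ∈ B ++ A := by
            have h4 := hv2
            rw [hLAB] at h4
            simp only [List.count_append, List.count_cons_self] at h4
            have h5 : 0 < List.count v A ∨ 0 < List.count v B := by omega
            rcases h5 with h5 | h5
            · exact List.mem_append.mpr (Or.inr (List.count_pos_iff.mp h5))
            · exact List.mem_append.mpr (Or.inl (List.count_pos_iff.mp h5))
          have h1 : v :: (B ++ A) = L.rotate A.length := by
            rw [hLAB, rot_app]; rfl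
          refine ⟨A.length, B ++ A, h1, hvBA, fun i => ?_⟩
          have hTne : B ++ A ≠ [] := List.ne_nil_of_mem hvBA
          have hvi : v ∉ P i := fun hmem => hvP ⟨i, hmem⟩
          obtain ⟨mi, hmi⟩ := hinv i
          rcases hmi with hmi | hmi
          · obtain ⟨k', hk'⟩ := transfer_pref h1 hTne hvi hmi
            exact ⟨k', Or.inl hk'⟩
          · obtain ⟨k', hk'⟩ := transfer_pref h1 hTne
              (fun hc => hvi (List.mem_reverse.mp hc)) hmi
            exact ⟨k', Or.inr hk'⟩
      obtain ⟨k, T, hvt, hvT, hinvT⟩ := hkey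
      have hTne : T ≠ [] := List.ne_nil_of_mem hvT
      have hlenT : T.length ≤ n := by
        have h1 : (L.rotate k).length = L.length := List.length_rotate L k
        rw [← hvt] at h1
        simp at h1
        omega
      obtain ⟨C, hC1, hC2, hC3, hC4⟩ := ih T hlenT hTne hinvT
      refine ⟨C, hC1, ?_, ?_, hC4⟩
      · intro u hu
        have h1 : u ∈ v :: T := by
          rw [hvt]
          exact (List.mem_rotate).mpr hu
        rcases List.mem_cons.mp h1 with rfl | h2
        · exact hC2 _ hvT
        · exact hC2 _ h2
      · refine hC3.trans ((cel_drop_cost d hd v T hTne).trans (le_of_eq ?_))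
        rw [hvt]
        exact List.Perm.sum_eq ((cel_rotate L k).map (ecost d))


-- bridges

lemma pathEdges_eq (l : List V) : pathEdges l = (wlist l).toFinset := rfl

lemma cycleEdges_eq (l : List V) : cycleEdges l = (cel l).toFinset := by
  unfold cycleEdges cel
  rw [← List.map_uncurry_zip_eq_zipWith]
  rfl

lemma cycleEdges_rotate (l : List V) (n : ℕ) : cycleEdges (l.rotate n) = cycleEdges l := by
  rw [cycleEdges_eq, cycleEdges_eq]
  exact List.toFinset_eq_of_perm _ _ (cel_rotate l n)

lemma pathEdges_subset_cycleEdges {Q C : List V} {m : ℕ} (h : Q <+: C.rotate m) :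
    pathEdges Q ⊆ cycleEdges C := by
  intro e he
  rw [pathEdges_eq, List.mem_toFinset] at he
  have h1 : e ∈ cel (C.rotate m) := wlist_subset_cel h e he
  rw [← cycleEdges_rotate C m, cycleEdges_eq, List.mem_toFinset]
  exact h1

lemma pathEdges_reverse (l : List V) : pathEdges l.reverse = pathEdges l := by
  rw [pathEdges_eq, pathEdges_eq, wlist_reverse, List.toFinset_reverse]

lemma walkCost_eq (d : V → V → ℝ) (l : List V) :
    walkCost d l = ((wlist l).map (ecost d)).sum := by
  simp [walkCost, walkEdges, wlist]

lemma cost_toFinset_le (d : V → V → ℝ) (hd : IsMetric d) (l : List (Sym2 V)) :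
    cost d l.toFinset ≤ (l.map (ecost d)).sum := by
  have h1 : (l.toFinset : Finset (Sym2 V)).val ≤ (↑l : Multiset (Sym2 V)) := by
    have h2 : (l.toFinset : Finset (Sym2 V)).val = (↑l : Multiset (Sym2 V)).dedup := by
      rfl
    rw [h2]
    exact Multiset.dedup_le _
  obtain ⟨u, hu⟩ := Multiset.le_iff_exists_add.mp h1
  have h3 : cost d l.toFinset = ((l.toFinset.val).map (ecost d)).sum :=
    Finset.sum_eq_multiset_sum _ _
  rw [h3]
  have h4 : ((↑l : Multiset (Sym2 V)).map (ecost d)).sum = (l.map (ecost d)).sum := by simp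
  rw [← h4, hu, Multiset.map_add, Multiset.sum_add]
  have h5 : 0 ≤ (u.map (ecost d)).sum := by
    apply Multiset.sum_nonneg
    intro x hx
    obtain ⟨e, _, rfl⟩ := Multiset.mem_map.mp hx
    exact ecost_nonneg d hd e
  linarith


/-- shortcutting a closed walk visiting all vertices into a Hamiltonian
cycle of no larger metric cost, preserving a family of pairwise vertex-disjoint
contiguous subpaths. -/
theorem stmt7 {V : Type*} [Fintype V] [DecidableEq V]
    (d : V → V → ℝ) (hd : IsMetric d)
    (W : List V) (hW : IsClosedWalk W) (hWall : ∀ v : V, v ∈ W)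
    (r : ℕ) (P : Fin r → List V)
    (hPnd : ∀ j, (P j).Nodup)
    (hPdisj : ∀ i j, i ≠ j → Disjoint (P i).toFinset (P j).toFinset)
    (hPsub : ∀ j, (P j) <:+: W ∨ (P j).reverse <:+: W) :
    ∃ C : List V, IsHamCycle C ∧ cost d (cycleEdges C) ≤ walkCost d W ∧
      ∀ j, (∃ m, (P j) <:+: C.rotate m ∨ (P j).reverse <:+: C.rotate m) ∧
        pathEdges (P j) ⊆ cycleEdges C := by
  obtain ⟨hne, hclosed⟩ := hW
  rcases W with _ | ⟨w, W'⟩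
  · exact absurd rfl hne
  rcases W' with _ | ⟨u, W''⟩
  · -- W = [w]
    refine ⟨[w], ⟨by simp, hWall⟩, ?_, fun j => ⟨⟨0, by simpa using hPsub j⟩, ?_⟩⟩
    · have h1 : cycleEdges [w] = {s(w, w)} := by
        simp [cycleEdges, List.rotate_singleton]
      have h2 : cost d ({s(w, w)} : Finset (Sym2 V)) = 0 := by
        simp [cost, ecost_mk, hd.2.1]
      have h3 : walkCost d [w] = 0 := by simp [walkCost, walkEdges]
      rw [h1, h2, h3]
    · have hlen : (P j).length ≤ 1 := by
        rcases hPsub j with h | h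
        · simpa using h.length_le
        · simpa using h.length_le
      rcases hP : P j with _ | ⟨a, rest⟩
      · simp [pathEdges, wlist]
      · rcases rest with _ | ⟨b, t⟩
        · simp [pathEdges]
        · rw [hP] at hlen; simp at hlen
  · -- W = w :: u :: W''
    set xs := (u :: W'').dropLast with hxs
    have hlast : (w :: u :: W'').getLast (List.cons_ne_nil _ _) = w := by
      have h1 := List.getLast?_eq_getLast (l := w :: u :: W'') (List.cons_ne_nil _ _)
      rw [← hclosed] at h1
      simpa using h1.symm
    have hWeq : w :: u :: W'' = (w :: xs) ++ [w] := by
      conv_lhs => rw [← List.dropLast_append_getLast (List.cons_ne_nil w (u :: W''))]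
      rw [List.dropLast_cons₂, hlast]
    have hinv0 : ∀ j, ∃ m, (P j) <+: (w :: xs).rotate m ∨ (P j).reverse <+: (w :: xs).rotate m := by
      intro j
      rcases hPsub j with h | h
      · rw [hWeq] at h
        obtain ⟨m, hm⟩ := infix_closed (hPnd j) w xs h
        exact ⟨m, Or.inl hm⟩
      · rw [hWeq] at h
        obtain ⟨m, hm⟩ := infix_closed (List.nodup_reverse.mpr (hPnd j)) w xs h
        exact ⟨m, Or.inr hm⟩
    obtain ⟨C, hC1, hC2, hC3, hC4⟩ := main_ind d hd P hPnd hPdisj (w :: xs).length (w :: xs)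
      le_rfl (List.cons_ne_nil _ _) hinv0
    have hCall : ∀ v : V, v ∈ C := by
      intro v
      have h1 := hWall v
      rw [hWeq] at h1
      rcases List.mem_append.mp h1 with h2 | h2
      · exact hC2 _ h2
      · exact hC2 _ (by simpa using Or.inl (List.mem_singleton.mp h2))
    refine ⟨C, ⟨hC1, hCall⟩, ?_, fun j => ?_⟩
    · have h1 : walkCost d (w :: u :: W'') = ((cel (w :: xs)).map (ecost d)).sum := by
        rw [walkCost_eq, hWeq, ← cel_cons]
      rw [h1, cycleEdges_eq]
      exact (cost_toFinset_le d hd (cel C)).trans hC3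
    · obtain ⟨m, hm⟩ := hC4 j
      rcases hm with hm | hm
      · exact ⟨⟨m, Or.inl hm.isInfix⟩, pathEdges_subset_cycleEdges hm⟩
      · exact ⟨⟨m, Or.inr hm.isInfix⟩, by
          rw [← pathEdges_reverse]; exact pathEdges_subset_cycleEdges hm⟩
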